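/- Given any symmetric positive definite block tridiagonal matrix with diagonal blocks A₀,…,A_N and superdiagonal blocks B₀,…,B_{N-1}, there exist unique backward Markov model parameters M^B_{k,k+1} (k ∈ [0,N-1]) and positive definite M^B₀,…,M^B_N with (M^B₀)⁻¹ = A₀, M^B_{k-1,k} = -M^B_{k-1} B_{k-1}, (M^B_{k-1})⁻¹ = A_{k-1} - (M^B_{k-2,k-1})' (M^B_{k-2})⁻¹ M^B_{k-2,k-1}, and (M^B_N)⁻¹ = A_N - (M^B_{N-1,N})' (M^B_{N-1})⁻¹ M^B_{N-1,N}, such that the matrix equals (𝓜^B)' (M^B)⁻¹ 𝓜^B where 𝓜^B is block upper bidiagonal with identity diagonal and superdiagonal blocks -M^B_{k,k+1} and M^B = diag(M^B₀,…,M^B_N). -/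

import Mathlib

open Matrix MeasureTheory

/-- Square `d × d` real matrices (one block). -/
abbrev SqMat (d : ℕ) := Matrix (Fin d) (Fin d) ℝ

/-- Big `(N+1)d × (N+1)d` real matrices, viewed as `(N+1) × (N+1)` arrays of
`d × d` blocks. -/
abbrev BigMat (N d : ℕ) := Matrix (Fin (N+1) × Fin d) (Fin (N+1) × Fin d) ℝ

/-- The `(i,j)` block of a big matrix. -/
def blk {N d : ℕ} (A : BigMat N d) (i j : Fin (N+1)) : SqMat d :=
  fun a b => A (i, a) (j, b)

/-- Block diagonal big matrix with diagonal blocks `D 0, …, D N`. -/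
def bdiag (N d : ℕ) (D : ℕ → SqMat d) : BigMat N d :=
  fun p q => if (p.1 : ℕ) = (q.1 : ℕ) then D (p.1 : ℕ) p.2 q.2 else 0

/-- The block lower bidiagonal matrix `𝓜` of a forward Markov model: identity blocks
on the diagonal and block `-(T k) = -M_{k,k-1}` in position `(k, k-1)` for `k ∈ [1,N]`. -/
def lowerBidiag (N d : ℕ) (T : ℕ → SqMat d) : BigMat N d :=
  fun p q =>
    if (p.1 : ℕ) = (q.1 : ℕ) then (if p.2 = q.2 then 1 else 0)
    else if (q.1 : ℕ) + 1 = (p.1 : ℕ) then -(T (p.1 : ℕ) p.2 q.2) else 0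

/-- The block upper bidiagonal matrix `𝓜ᴮ` of a backward Markov model: identity blocks
on the diagonal and block `-(T k) = -Mᴮ_{k,k+1}` in position `(k, k+1)` for `k ∈ [0,N-1]`. -/
def upperBidiag (N d : ℕ) (T : ℕ → SqMat d) : BigMat N d :=
  fun p q =>
    if (p.1 : ℕ) = (q.1 : ℕ) then (if p.2 = q.2 then 1 else 0)
    else if (p.1 : ℕ) + 1 = (q.1 : ℕ) then -(T (p.1 : ℕ) p.2 q.2) else 0

namespace BMF

variable {N d : ℕ}

def ofBlocks (M : Fin (N+1) → Fin (N+1) → SqMat d) : BigMat N d :=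
  fun p q => M p.1 q.1 p.2 q.2

lemma blk_ofBlocks (M : Fin (N+1) → Fin (N+1) → SqMat d) (i j : Fin (N+1)) :
    blk (ofBlocks M) i j = M i j := rfl

lemma eq_of_blk {M M' : BigMat N d} (h : ∀ i j, blk M i j = blk M' i j) : M = M' := by
  ext p q
  have := congrFun (congrFun (h p.1 q.1) p.2) q.2
  simpa [blk] using this

lemma ofBlocks_mul (M M' : Fin (N+1) → Fin (N+1) → SqMat d) :
    ofBlocks M * ofBlocks M' = ofBlocks (fun i j => ∑ k, M i k * M' k j) := by
  ext p q
  simp only [Matrix.mul_apply, ofBlocks, Fintype.sum_prod_type, Matrix.sum_apply]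

def ub (T : ℕ → SqMat d) : Fin (N+1) → Fin (N+1) → SqMat d := fun i j =>
  if (i:ℕ) = (j:ℕ) then 1 else if (i:ℕ)+1 = (j:ℕ) then -(T (i:ℕ)) else 0

def ubt (T : ℕ → SqMat d) : Fin (N+1) → Fin (N+1) → SqMat d := fun i j =>
  if (i:ℕ) = (j:ℕ) then 1 else if (j:ℕ)+1 = (i:ℕ) then -(T (j:ℕ))ᵀ else 0

def db (S : ℕ → SqMat d) : Fin (N+1) → Fin (N+1) → SqMat d := fun i j =>
  if (i:ℕ) = (j:ℕ) then S (i:ℕ) else 0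

lemma upperBidiag_eq (T : ℕ → SqMat d) : upperBidiag N d T = ofBlocks (ub T) := by
  ext p q
  simp only [upperBidiag, ofBlocks, ub]
  split_ifs <;> simp_all [Matrix.one_apply]

lemma upperBidiag_transpose (T : ℕ → SqMat d) :
    (upperBidiag N d T)ᵀ = ofBlocks (ubt T) := by
  ext p q
  simp only [Matrix.transpose_apply, upperBidiag, ofBlocks, ubt]
  by_cases h1 : (p.1:ℕ) = (q.1:ℕ)
  · simp [h1, Matrix.one_apply, eq_comm]
  · have h1' : (q.1:ℕ) ≠ (p.1:ℕ) := fun h => h1 h.symm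
    by_cases h2 : (q.1:ℕ)+1 = (p.1:ℕ) <;> simp [h1, h1', h2]

lemma bdiag_eq (S : ℕ → SqMat d) : bdiag N d S = ofBlocks (db S) := by
  ext p q
  simp only [bdiag, ofBlocks, db]
  split_ifs <;> simp
def F (T S : ℕ → SqMat d) (i j : ℕ) : SqMat d :=
  if i = j then (if i = 0 then S 0 else S i + (T (i-1))ᵀ * S (i-1) * T (i-1))
  else if i + 1 = j then -(S i * T i)
  else if j + 1 = i then -((T j)ᵀ * S j)
  else 0

lemma ub_eq {T : ℕ → SqMat d} {i j : Fin (N+1)} (h : (i:ℕ) = (j:ℕ)) : ub T i j = 1 :=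
  if_pos h

lemma ub_succ {T : ℕ → SqMat d} {i j : Fin (N+1)} (h : (i:ℕ)+1 = (j:ℕ)) :
    ub T i j = -(T (i:ℕ)) := by
  unfold ub; rw [if_neg (by omega), if_pos h]

lemma ub_zero {T : ℕ → SqMat d} {i j : Fin (N+1)} (h1 : (i:ℕ) ≠ (j:ℕ))
    (h2 : (i:ℕ)+1 ≠ (j:ℕ)) : ub T i j = 0 := by
  unfold ub; rw [if_neg h1, if_neg h2]

lemma ubt_eq {T : ℕ → SqMat d} {i j : Fin (N+1)} (h : (i:ℕ) = (j:ℕ)) : ubt T i j = 1 :=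
  if_pos h

lemma ubt_succ {T : ℕ → SqMat d} {i j : Fin (N+1)} (h : (j:ℕ)+1 = (i:ℕ)) :
    ubt T i j = -(T (j:ℕ))ᵀ := by
  unfold ubt; rw [if_neg (by omega), if_pos h]

lemma ubt_zero {T : ℕ → SqMat d} {i j : Fin (N+1)} (h1 : (i:ℕ) ≠ (j:ℕ))
    (h2 : (j:ℕ)+1 ≠ (i:ℕ)) : ubt T i j = 0 := by
  unfold ubt; rw [if_neg h1, if_neg h2]

lemma sum_two {M : Type*} [AddCommMonoid M] {n : ℕ} (f : Fin n → M) (i j : Fin n)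
    (hij : i ≠ j) (h : ∀ k, k ≠ i → k ≠ j → f k = 0) : ∑ k, f k = f i + f j := by
  classical
  have h2 : ∑ k, f k = ∑ k ∈ ({i, j} : Finset (Fin n)), f k := by
    refine (Finset.sum_subset (Finset.subset_univ _) ?_).symm
    intro k _ hk
    simp only [Finset.mem_insert, Finset.mem_singleton] at hk
    push_neg at hk
    exact h k hk.1 hk.2
  rw [h2, Finset.sum_pair hij]

lemma master (T S : ℕ → SqMat d) (i j : Fin (N+1)) :
    blk ((upperBidiag N d T)ᵀ * bdiag N d S * upperBidiag N d T) i j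
      = F T S (i:ℕ) (j:ℕ) := by
  rw [upperBidiag_transpose, bdiag_eq, upperBidiag_eq, ofBlocks_mul, ofBlocks_mul,
    blk_ofBlocks]
  have inner : ∀ l : Fin (N+1), (∑ k, ubt T i k * db S k l) = ubt T i l * S (l:ℕ) := by
    intro l
    rw [Finset.sum_eq_single l]
    · simp [db]
    · intro k _ hk
      have hk' : (k:ℕ) ≠ (l:ℕ) := fun h => hk (Fin.ext h)
      simp [db, hk']
    · simp
  simp only [inner]
  rcases Nat.eq_zero_or_eq_succ_pred (i:ℕ) with h0 | hs
  · -- i.val = 0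
    rw [Finset.sum_eq_single i]
    · rw [ubt_eq rfl, one_mul]
      by_cases hj0 : (i:ℕ) = (j:ℕ)
      · rw [ub_eq hj0, mul_one]
        have hj' : (j:ℕ) = 0 := by omega
        simp [F, h0, hj']
      · by_cases hj1 : (i:ℕ)+1 = (j:ℕ)
        · rw [ub_succ hj1]
          simp only [F, if_neg hj0, if_pos hj1, mul_neg]
        · rw [ub_zero hj0 hj1, mul_zero]
          have e3 : ¬ (j:ℕ)+1 = (i:ℕ) := by omega
          simp only [F, if_neg hj0, if_neg hj1, if_neg e3]
    · intro l _ hl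
      have h1 : (i:ℕ) ≠ (l:ℕ) := fun h => hl (Fin.ext h.symm)
      have h2 : (l:ℕ)+1 ≠ (i:ℕ) := by omega
      rw [ubt_zero h1 h2, zero_mul, zero_mul]
    · simp
  · -- i.val = m+1
    set m := (i:ℕ) - 1 with hm
    have him : (i:ℕ) = m+1 := hs
    set i' : Fin (N+1) := ⟨m, by have := i.isLt; omega⟩ with hi'
    have hvi' : (i':ℕ) = m := rfl
    have hii' : i ≠ i' := by
      intro h
      have h2 : (i:ℕ) = m := by rw [h]
      omega
    rw [sum_two _ i i' hii' ?side]
    case side =>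
      intro l hl1 hl2
      have h1 : (i:ℕ) ≠ (l:ℕ) := fun h => hl1 (Fin.ext h.symm)
      have h2 : (l:ℕ)+1 ≠ (i:ℕ) := by
        intro h
        apply hl2; apply Fin.ext
        show (l:ℕ) = m; omega
      rw [ubt_zero h1 h2, zero_mul, zero_mul]
    rw [ubt_eq rfl, one_mul, ubt_succ (show (i':ℕ)+1 = (i:ℕ) by omega), hvi']
    by_cases hj0 : (i:ℕ) = (j:ℕ)
    · rw [ub_eq hj0, mul_one, ub_succ (show (i':ℕ)+1 = (j:ℕ) by omega), hvi']
      have hne : ¬ (i:ℕ) = 0 := by omega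
      simp only [F, if_pos hj0, if_neg hne, ← hm]
      rw [neg_mul, neg_mul, mul_neg, neg_neg]
    · by_cases hj1 : (i:ℕ)+1 = (j:ℕ)
      · rw [ub_succ hj1, ub_zero (by omega) (by simp only [hvi']; omega),
          mul_zero, add_zero]
        simp only [F, if_neg hj0, if_pos hj1, mul_neg]
      · by_cases hj2 : (j:ℕ)+1 = (i:ℕ)
        · rw [ub_zero (by omega) (by omega),
            ub_eq (show (i':ℕ) = (j:ℕ) by simp only [hvi']; omega),
            mul_zero, mul_one, zero_add]
          simp only [F, if_neg hj0, if_neg hj1, if_pos hj2]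
          have hjm : (j:ℕ) = m := by omega
          rw [hjm, neg_mul]
        · rw [ub_zero hj0 hj1, ub_zero (by simp only [hvi']; omega)
            (by simp only [hvi']; omega), mul_zero, mul_zero, add_zero]
          simp only [F, if_neg hj0, if_neg hj1, if_neg hj2]

def Ablk (J : BigMat N d) (m : ℕ) : SqMat d :=
  if h : m < N + 1 then blk J ⟨m, h⟩ ⟨m, h⟩ else 1

def Bblk (J : BigMat N d) (m : ℕ) : SqMat d :=
  if h : m + 1 < N + 1 then blk J ⟨m, by omega⟩ ⟨m + 1, h⟩ else 0

noncomputable def Sr (J : BigMat N d) : ℕ → SqMat d := fun k =>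
  Nat.rec (Ablk J 0)
    (fun k prev =>
      if k + 1 < N + 1 then Ablk J (k+1) - (Bblk J k)ᵀ * prev⁻¹ * Bblk J k else 1) k

lemma Sr_zero (J : BigMat N d) : Sr J 0 = Ablk J 0 := rfl

lemma Sr_succ (J : BigMat N d) (k : ℕ) :
    Sr J (k+1)
      = if k + 1 < N + 1 then Ablk J (k+1) - (Bblk J k)ᵀ * (Sr J k)⁻¹ * Bblk J k
        else 1 := rfl

noncomputable def Tr (J : BigMat N d) (k : ℕ) : SqMat d := -((Sr J k)⁻¹ * Bblk J k)

lemma conj_calc {S B : SqMat d} (hS : S.PosDef) :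
    (-(S⁻¹ * B))ᵀ * S * (-(S⁻¹ * B)) = Bᵀ * S⁻¹ * B := by
  have hdet : IsUnit S.det := hS.det_pos.ne'.isUnit
  have hSt : Sᵀ = S := by
    rw [← Matrix.conjTranspose_eq_transpose_of_trivial]; exact hS.isHermitian
  have hXt : (S⁻¹)ᵀ = S⁻¹ := by rw [Matrix.transpose_nonsing_inv, hSt]
  calc (-(S⁻¹ * B))ᵀ * S * (-(S⁻¹ * B))
      = (Bᵀ * (S⁻¹)ᵀ) * S * (S⁻¹ * B) := by
        rw [Matrix.transpose_neg, Matrix.transpose_mul]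
        simp only [neg_mul, mul_neg, neg_neg]
    _ = Bᵀ * (S⁻¹ * ((S * S⁻¹) * B)) := by rw [hXt]; simp only [Matrix.mul_assoc]
    _ = Bᵀ * (S⁻¹ * B) := by rw [Matrix.mul_nonsing_inv _ hdet, Matrix.one_mul]
    _ = Bᵀ * S⁻¹ * B := by rw [Matrix.mul_assoc]

lemma blk_symm {J : BigMat N d} (hsymm : J.IsSymm) (i j : Fin (N+1)) :
    blk J j i = (blk J i j)ᵀ := by
  ext a b
  show J (j, a) (i, b) = J (i, b) (j, a)
  conv_lhs => rw [← hsymm]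
  rfl

lemma blk_eq_F (J : BigMat N d) (hsymm : J.IsSymm)
    (htri : ∀ i j : Fin (N+1), ((i : ℕ) + 1 < (j : ℕ) ∨ (j : ℕ) + 1 < (i : ℕ)) →
      blk J i j = 0)
    {k : ℕ} (hk : k ≤ N) (hpd : ∀ m < k, (Sr J m).PosDef) (i j : Fin (N+1))
    (hi : (i:ℕ) ≤ k) (hj : (j:ℕ) ≤ k) :
    blk J i j = F (Tr J) (Sr J) (i:ℕ) (j:ℕ) := by
  by_cases hj0 : (i:ℕ) = (j:ℕ)
  · have hij : i = j := Fin.ext hj0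
    subst hij
    rcases Nat.eq_zero_or_eq_succ_pred (i:ℕ) with h0 | hs
    · have hi0 : i = ⟨0, by omega⟩ := Fin.ext h0
      simp only [F, if_pos hj0, h0, if_pos rfl]
      rw [hi0]
      show blk J _ _ = Sr J 0
      rw [Sr_zero, Ablk, dif_pos (by omega : 0 < N + 1)]
    · set m := (i:ℕ) - 1 with hm
      have him : (i:ℕ) = m + 1 := hs
      have hmk : m < k := by omega
      have hmN : m + 1 < N + 1 := by omega
      have hpdm := hpd m hmk
      have hSval : Sr J (m+1)
          = Ablk J (m+1) - (Bblk J m)ᵀ * (Sr J m)⁻¹ * Bblk J m := by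
        rw [Sr_succ, if_pos hmN]
      have hTval : (Tr J m)ᵀ * Sr J m * Tr J m
          = (Bblk J m)ᵀ * (Sr J m)⁻¹ * Bblk J m := by
        rw [Tr]; exact conj_calc hpdm
      simp only [F, if_pos hj0, if_neg (show ¬ (i:ℕ) = 0 by omega), ← hm]
      rw [hTval]
      have : Sr J m.succ = Sr J (m+1) := rfl
      rw [show (i:ℕ) = m + 1 from him] at hi ⊢
      rw [hSval, sub_add_cancel]
      rw [Ablk, dif_pos hmN]
      have hieq : i = ⟨m+1, hmN⟩ := Fin.ext him
      rw [hieq]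
      simp
  · by_cases hj1 : (i:ℕ)+1 = (j:ℕ)
    · have hik : (i:ℕ) < k := by omega
      have hpdi := hpd _ hik
      have hdet : IsUnit (Sr J (i:ℕ)).det := hpdi.det_pos.ne'.isUnit
      simp only [F, if_neg hj0, if_pos hj1, Tr, mul_neg, neg_neg]
      rw [← Matrix.mul_assoc, Matrix.mul_nonsing_inv _ hdet, Matrix.one_mul]
      rw [Bblk, dif_pos (show (i:ℕ)+1 < N+1 by omega)]
      have hieq : i = ⟨(i:ℕ), by omega⟩ := Fin.ext rfl
      have hjeq : j = ⟨(i:ℕ)+1, by omega⟩ := Fin.ext hj1.symm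
      rw [← hieq, ← hjeq]
    · by_cases hj2 : (j:ℕ)+1 = (i:ℕ)
      · have hjk : (j:ℕ) < k := by omega
        have hpdj := hpd _ hjk
        have hdet : IsUnit (Sr J (j:ℕ)).det := hpdj.det_pos.ne'.isUnit
        have hSt : (Sr J (j:ℕ))ᵀ = Sr J (j:ℕ) := by
          rw [← Matrix.conjTranspose_eq_transpose_of_trivial]
          exact hpdj.isHermitian
        have hXt : ((Sr J (j:ℕ))⁻¹)ᵀ = (Sr J (j:ℕ))⁻¹ := by
          rw [Matrix.transpose_nonsing_inv, hSt]
        simp only [F, if_neg hj0, if_neg hj1, if_pos hj2, Tr, Matrix.transpose_neg,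
          Matrix.transpose_mul, hXt, neg_mul, neg_neg]
        rw [Matrix.mul_assoc, Matrix.nonsing_inv_mul _ hdet, Matrix.mul_one]
        rw [blk_symm hsymm j i]
        rw [Bblk, dif_pos (show (j:ℕ)+1 < N+1 by omega)]
        have hjeq : j = ⟨(j:ℕ), by omega⟩ := Fin.ext rfl
        have hieq : i = ⟨(j:ℕ)+1, by omega⟩ := Fin.ext hj2.symm
        rw [← hjeq, ← hieq]
      · rw [htri i j (by omega)]
        simp only [F, if_neg hj0, if_neg hj1, if_neg hj2]

lemma dot_congr (M M' : BigMat N d) (x : Fin (N+1) × Fin d → ℝ)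
    (P : Fin (N+1) × Fin d → Prop)
    (hx : ∀ p, ¬ P p → x p = 0) (h : ∀ p q, P p → P q → M p q = M' p q) :
    x ⬝ᵥ M *ᵥ x = x ⬝ᵥ M' *ᵥ x := by
  simp only [dotProduct, Matrix.mulVec, dotProduct]
  refine Finset.sum_congr rfl fun p _ => ?_
  by_cases hp : P p
  · congr 1
    refine Finset.sum_congr rfl fun q _ => ?_
    by_cases hq : P q
    · rw [h p q hp hq]
    · rw [hx q hq, mul_zero, mul_zero]
  · rw [hx p hp, zero_mul, zero_mul]

lemma dot_single (M : BigMat N d) (κ : Fin (N+1)) (v : Fin d → ℝ) :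
    (fun p : Fin (N+1) × Fin d => if p.1 = κ then v p.2 else 0) ⬝ᵥ
      M *ᵥ (fun p => if p.1 = κ then v p.2 else 0)
    = v ⬝ᵥ (blk M κ κ) *ᵥ v := by
  simp only [dotProduct, Matrix.mulVec, dotProduct, Fintype.sum_prod_type]
  rw [Finset.sum_eq_single κ]
  · simp only [if_pos rfl]
    refine Finset.sum_congr rfl fun b _ => ?_
    congr 1
    rw [Finset.sum_eq_single κ]
    · simp only [if_pos rfl]
      rfl
    · intro a _ ha
      simp [ha]
    · simp
  · intro a _ ha
    simp [ha]
  · simp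

noncomputable def wvec (T : ℕ → SqMat d) (k : ℕ) (v : Fin d → ℝ) : ℕ → Fin d → ℝ
  | 0 => v
  | m+1 => T (k - (m+1)) *ᵥ wvec T k v m

lemma Sr_posDef (J : BigMat N d) (hJ : J.PosDef) (hsymm : J.IsSymm)
    (htri : ∀ i j : Fin (N+1), ((i : ℕ) + 1 < (j : ℕ) ∨ (j : ℕ) + 1 < (i : ℕ)) →
      blk J i j = 0) :
    ∀ k, k ≤ N → (Sr J k).PosDef := by
  intro k
  induction k using Nat.strong_induction_on with
  | _ k IH =>
  intro hk
  have hpd : ∀ m < k, (Sr J m).PosDef := fun m hm => IH m hm (by omega)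
  rw [Matrix.posDef_iff_dotProduct_mulVec]
  constructor
  · -- Hermitian part
    have hdiag : ∀ i : Fin (N+1), (blk J i i).IsHermitian := by
      intro i
      show (blk J i i)ᴴ = blk J i i
      rw [Matrix.conjTranspose_eq_transpose_of_trivial, ← blk_symm hsymm]
    cases k with
    | zero =>
      rw [Sr_zero, Ablk, dif_pos (by omega : 0 < N + 1)]
      exact hdiag _
    | succ m =>
      rw [Sr_succ, if_pos (by omega : m + 1 < N + 1)]
      refine Matrix.IsHermitian.sub ?_ ?_
      · rw [Ablk, dif_pos (by omega : m + 1 < N + 1)]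
        exact hdiag _
      · have hX : ((Sr J m)⁻¹).IsHermitian := ((hpd m (by omega)).inv).isHermitian
        have := Matrix.isHermitian_conjTranspose_mul_mul (Bblk J m) hX
        rwa [Matrix.conjTranspose_eq_transpose_of_trivial] at this
  · -- positivity
    intro v hv
    set κ : Fin (N+1) := ⟨k, by omega⟩ with hκ
    set w : ℕ → Fin d → ℝ := wvec (Tr J) k v with hw
    have hw0 : w 0 = v := rfl
    have hwsucc : ∀ m, w (m+1) = Tr J (k - (m+1)) *ᵥ w m := fun m => rfl
    set x : Fin (N+1) × Fin d → ℝ :=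
      fun p => if h : (p.1:ℕ) ≤ k then w (k - (p.1:ℕ)) p.2 else 0 with hx
    set y : Fin (N+1) × Fin d → ℝ := fun p => if p.1 = κ then v p.2 else 0 with hy
    have hxκ : ∀ b, x (κ, b) = v b := by
      intro b
      simp only [hx, dif_pos (le_refl k)]
      rw [dif_pos (show (κ:ℕ) ≤ k from le_refl k)]
      show w (k - k) b = v b
      rw [Nat.sub_self, hw0]
    have hxne : x ≠ 0 := by
      obtain ⟨a, ha⟩ := Function.ne_iff.mp hv
      intro h
      apply ha
      have := congrFun h (κ, a)
      rwa [hxκ a] at this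
    -- U *ᵥ x = y
    have hUx : upperBidiag N d (Tr J) *ᵥ x = y := by
      funext p
      obtain ⟨p1, p2⟩ := p
      show (∑ q : Fin (N+1) × Fin d, upperBidiag N d (Tr J) (p1,p2) q * x q) = y (p1,p2)
      rw [Fintype.sum_prod_type]
      have diagsum : (∑ b, upperBidiag N d (Tr J) (p1,p2) (p1,b) * x (p1,b)) = x (p1,p2) := by
        rw [Finset.sum_eq_single p2]
        · show (if (p1:ℕ) = (p1:ℕ) then _ else _) * x (p1,p2) = x (p1,p2)
          rw [if_pos rfl, if_pos rfl, one_mul]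
        · intro b _ hb
          show (if (p1:ℕ) = (p1:ℕ) then _ else _) * x (p1,b) = 0
          rw [if_pos rfl, if_neg (fun h => hb h.symm), zero_mul]
        · simp
      by_cases hpN : (p1:ℕ) < N
      · set p1' : Fin (N+1) := ⟨(p1:ℕ)+1, by omega⟩ with hp1'
        have hval : (p1':ℕ) = (p1:ℕ)+1 := rfl
        have hne : p1 ≠ p1' := by
          intro h
          have h2 : (p1:ℕ) = (p1:ℕ)+1 := congrArg Fin.val h
          omega
        rw [sum_two _ p1 p1' hne ?side]
        case side =>
          intro a ha1 ha2
          have h1 : (p1:ℕ) ≠ (a:ℕ) := fun h => ha1 (Fin.ext h).symm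
          have h2 : (p1:ℕ)+1 ≠ (a:ℕ) := by
            intro h
            exact ha2 (Fin.ext (show (a:ℕ) = (p1':ℕ) from h.symm))
          refine Finset.sum_eq_zero fun b _ => ?_
          show (if (p1:ℕ) = (a:ℕ) then _ else _) * x (a,b) = 0
          rw [if_neg h1, if_neg h2, zero_mul]
        rw [diagsum]
        have succsum : (∑ b, upperBidiag N d (Tr J) (p1,p2) (p1',b) * x (p1',b))
            = -(∑ b, Tr J (p1:ℕ) p2 b * x (p1',b)) := by
          rw [← Finset.sum_neg_distrib]
          refine Finset.sum_congr rfl fun b _ => ?_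
          show (if (p1:ℕ) = (p1':ℕ) then _ else _) * x (p1',b) = _
          rw [if_neg (by show ¬ (p1:ℕ) = (p1:ℕ)+1; omega),
            if_pos (show (p1:ℕ)+1 = (p1':ℕ) from rfl), neg_mul]
        rw [succsum]
        rcases lt_trichotomy (p1:ℕ) k with hlt | heq | hgt
        · -- p1 < k : telescoping cancellation
          have hx1 : ∀ b, x (p1, b) = w (k - (p1:ℕ)) b := by
            intro b; simp only [hx, dif_pos (le_of_lt hlt)]
          have hx2 : ∀ b, x (p1', b) = w (k - ((p1:ℕ)+1)) b := by
            intro b; simp only [hx]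
            rw [dif_pos (show ((p1':Fin (N+1)):ℕ) ≤ k from by omega)]
          have hsum2 : (∑ b, Tr J (p1:ℕ) p2 b * x (p1',b)) = w (k - (p1:ℕ)) p2 := by
            have e1 : k - (p1:ℕ) = (k - ((p1:ℕ)+1)) + 1 := by omega
            have e2 : k - ((k - ((p1:ℕ)+1)) + 1) = (p1:ℕ) := by omega
            rw [e1, hwsucc, e2]
            refine Finset.sum_congr rfl fun b _ => ?_
            rw [hx2 b]
          rw [hsum2, hx1 p2]
          have : y (p1, p2) = 0 := by
            simp only [hy]
            rw [if_neg (fun h => by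
              have h2 : (p1:ℕ) = k := congrArg Fin.val h
              omega)]
          rw [this]
          ring
        · -- p1 = k
          have hp1κ : p1 = κ := Fin.ext heq
          have : ∀ b, x (p1', b) = 0 := by
            intro b; simp only [hx]
            rw [dif_neg (show ¬ ((p1':Fin (N+1)):ℕ) ≤ k from by omega)]
          simp only [this, mul_zero, Finset.sum_const_zero, neg_zero, add_zero]
          rw [hp1κ, hxκ]
          simp [hy]
        · -- p1 > k
          have hx0 : ∀ b, x (p1, b) = 0 := by
            intro b; simp only [hx]; rw [dif_neg (by omega)]
          have hx0' : ∀ b, x (p1', b) = 0 := by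
            intro b; simp only [hx]
            rw [dif_neg (show ¬ ((p1':Fin (N+1)):ℕ) ≤ k from by omega)]
          rw [hx0]
          simp only [hx0', mul_zero, Finset.sum_const_zero, neg_zero, add_zero]
          simp only [hy]
          rw [if_neg (fun h => by
            have h2 : (p1:ℕ) = k := congrArg Fin.val h
            omega)]
      · -- p1 = N : no superdiagonal term
        have hpN' : (p1:ℕ) = N := by have := p1.isLt; omega
        rw [Finset.sum_eq_single p1]
        · rw [diagsum]
          by_cases hkN : k = N
          · have hκv : (κ:ℕ) = k := rfl
            have hp1κ : p1 = κ := Fin.ext (by omega)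
            rw [hp1κ, hxκ]
            simp [hy]
          · have h1 : ¬ (p1:ℕ) ≤ k := by omega
            simp only [hx]
            rw [dif_neg h1]
            simp only [hy]
            rw [if_neg (fun h => by
              have h2 : (p1:ℕ) = k := congrArg Fin.val h
              omega)]
        · intro a _ ha
          have h1 : (p1:ℕ) ≠ (a:ℕ) := fun h => ha (Fin.ext h).symm
          have h2 : (p1:ℕ)+1 ≠ (a:ℕ) := by have := a.isLt; omega
          refine Finset.sum_eq_zero fun b _ => ?_
          show (if (p1:ℕ) = (a:ℕ) then _ else _) * x (a,b) = 0
          rw [if_neg h1, if_neg h2, zero_mul]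
        · simp
    -- now the chain of equalities
    set U := upperBidiag N d (Tr J) with hU
    set D := bdiag N d (Sr J) with hD
    have hQJ : x ⬝ᵥ J *ᵥ x = x ⬝ᵥ (Uᵀ * D * U) *ᵥ x := by
      refine dot_congr _ _ x (fun p => (p.1:ℕ) ≤ k) ?_ ?_
      · intro p hp
        simp only [hx]
        rw [dif_neg hp]
      · intro p q hp hq
        have e1 : J p q = blk J p.1 q.1 p.2 q.2 := rfl
        have e2 : (Uᵀ * D * U) p q = blk (Uᵀ * D * U) p.1 q.1 p.2 q.2 := rfl
        rw [e1, e2, master, blk_eq_F J hsymm htri hk hpd p.1 q.1 hp hq]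
    have hQy : x ⬝ᵥ (Uᵀ * D * U) *ᵥ x = v ⬝ᵥ (Sr J k) *ᵥ v := by
      rw [← Matrix.mulVec_mulVec, ← Matrix.mulVec_mulVec]
      rw [Matrix.dotProduct_mulVec, Matrix.vecMul_transpose, hUx]
      rw [hy]
      rw [dot_single (M := D) κ v]
      have hblk : blk D κ κ = Sr J k := by
        ext a b
        show (if ((κ:Fin (N+1)):ℕ) = ((κ:Fin (N+1)):ℕ)
            then Sr J ((κ:Fin (N+1)):ℕ) a b else 0) = Sr J k a b
        rw [if_pos rfl]
      rw [hblk]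
    have hpos := hJ.dotProduct_mulVec_pos hxne
    rw [show star x = x from funext fun p => star_trivial _] at hpos
    rw [hQJ, hQy] at hpos
    rwa [show star v = v from funext fun p => star_trivial _]

lemma F_congr (T : ℕ → SqMat d) (S S' : ℕ → SqMat d) (i j : ℕ)
    (h : ∀ m, m ≤ max i j → S m = S' m) : F T S i j = F T S' i j := by
  unfold F
  split_ifs with h1 h2 h3 h4
  · rw [h 0 (by omega)]
  · rw [h i (by omega), h (i-1) (by omega)]
  · rw [h i (by omega)]
  · rw [h j (by omega)]
  · rfl

end BMF

open BMF

/-- any symmetric positive definite block tridiagonal matrix (diagonal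
blocks `A_k = blk J k k`, superdiagonal blocks `B_k = blk J k (k+1)`) admits a unique
backward Markov factorization `J = (𝓜ᴮ)ᵀ (Mᴮ)⁻¹ 𝓜ᴮ` with `𝓜ᴮ` block upper bidiagonal
(identity diagonal, superdiagonal blocks `-Mᴮ_{k,k+1}`) and `Mᴮ = diag(Mᴮ₀,…,Mᴮ_N)`
positive definite; the parameters are given by the forward recursion `(Mᴮ₀)⁻¹ = A₀`,
`Mᴮ_{k,k+1} = -Mᴮ_k B_k`, `(Mᴮ_{k+1})⁻¹ = A_{k+1} - (Mᴮ_{k,k+1})ᵀ (Mᴮ_k)⁻¹ Mᴮ_{k,k+1}`. -/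
theorem backward_markov_factorization {N d : ℕ} (J : BigMat N d) (hJ : J.PosDef)
    (hsymm : J.IsSymm)
    (htri : ∀ i j : Fin (N+1), ((i : ℕ) + 1 < (j : ℕ) ∨ (j : ℕ) + 1 < (i : ℕ)) →
      blk J i j = 0) :
    (∃ TB MB : ℕ → SqMat d,
      ((∀ k ≤ N, (MB k).PosDef) ∧
        J = (upperBidiag N d TB)ᵀ * bdiag N d (fun k => (MB k)⁻¹) * upperBidiag N d TB) ∧
      ((MB 0)⁻¹ = blk J ⟨0, by omega⟩ ⟨0, by omega⟩ ∧
       (∀ k, ∀ _ : k < N,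
          TB k = -(MB k * blk J ⟨k, by omega⟩ ⟨k+1, by omega⟩) ∧
          (MB (k+1))⁻¹ = blk J ⟨k+1, by omega⟩ ⟨k+1, by omega⟩
            - (TB k)ᵀ * (MB k)⁻¹ * TB k))) ∧
    (∀ TB₁ MB₁ TB₂ MB₂ : ℕ → SqMat d,
      (∀ k ≤ N, (MB₁ k).PosDef) → (∀ k ≤ N, (MB₂ k).PosDef) →
      J = (upperBidiag N d TB₁)ᵀ * bdiag N d (fun k => (MB₁ k)⁻¹) * upperBidiag N d TB₁ →
      J = (upperBidiag N d TB₂)ᵀ * bdiag N d (fun k => (MB₂ k)⁻¹) * upperBidiag N d TB₂ →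
      (∀ k ≤ N, MB₁ k = MB₂ k) ∧ (∀ k < N, TB₁ k = TB₂ k)) := by
  have hS := Sr_posDef J hJ hsymm htri
  have hdet : ∀ k ≤ N, IsUnit (Sr J k).det := fun k hk => (hS k hk).det_pos.ne'.isUnit
  have hinv2 : ∀ k ≤ N, ((Sr J k)⁻¹)⁻¹ = Sr J k :=
    fun k hk => Matrix.nonsing_inv_nonsing_inv _ (hdet k hk)
  constructor
  · refine ⟨Tr J, fun k => (Sr J k)⁻¹, ⟨⟨?_, ?_⟩, ?_, ?_⟩⟩
    · exact fun k hk => (hS k hk).inv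
    · refine eq_of_blk fun i j => ?_
      rw [master]
      rw [blk_eq_F J hsymm htri (le_refl N) (fun m hm => hS m (by omega)) i j
        (by omega) (by omega)]
      refine F_congr _ _ _ _ _ fun m hm => ?_
      have hmN : m ≤ N := by
        have h1 := i.isLt
        have h2 := j.isLt
        omega
      exact (hinv2 m hmN).symm
    · rw [hinv2 0 (by omega), Sr_zero, Ablk, dif_pos (by omega : 0 < N + 1)]
    · intro k hk
      have hk1 : k ≤ N := by omega
      constructor
      · show Tr J k = _
        rw [Tr, Bblk, dif_pos (show k + 1 < N + 1 by omega)]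
      · show ((Sr J (k+1))⁻¹)⁻¹ = _
        rw [hinv2 (k+1) (by omega)]
        have e2 : ((Sr J k)⁻¹)⁻¹ = Sr J k := hinv2 k hk1
        rw [Sr_succ, if_pos (show k + 1 < N + 1 by omega)]
        rw [show (Tr J k)ᵀ * ((Sr J k)⁻¹)⁻¹ * Tr J k
            = (Bblk J k)ᵀ * (Sr J k)⁻¹ * Bblk J k from by
          rw [e2, Tr]; exact conj_calc (hS k hk1)]
        rw [Ablk, dif_pos (show k + 1 < N + 1 by omega),
          Bblk, dif_pos (show k + 1 < N + 1 by omega)]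
  · intro T₁ M₁ T₂ M₂ h1pd h2pd hf1 hf2
    have hkey : ∀ i j : Fin (N+1),
        F T₁ (fun k => (M₁ k)⁻¹) (i:ℕ) (j:ℕ) = F T₂ (fun k => (M₂ k)⁻¹) (i:ℕ) (j:ℕ) := by
      intro i j
      have e1 : blk J i j = F T₁ (fun k => (M₁ k)⁻¹) (i:ℕ) (j:ℕ) := by
        conv_lhs => rw [hf1]
        exact master _ _ i j
      have e2 : blk J i j = F T₂ (fun k => (M₂ k)⁻¹) (i:ℕ) (j:ℕ) := by
        conv_lhs => rw [hf2]
        exact master _ _ i j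
      rw [← e1, e2]
    have hstep : ∀ k, k ≤ N → ((M₁ k)⁻¹ = (M₂ k)⁻¹ ∧ ∀ m < k, T₁ m = T₂ m) := by
      intro k
      induction k with
      | zero =>
        intro _
        constructor
        · have e := hkey ⟨0, by omega⟩ ⟨0, by omega⟩
          simpa [F] using e
        · intro m hm; omega
      | succ k IH =>
        intro hk1
        have hk : k ≤ N := by omega
        obtain ⟨hSk, hTm⟩ := IH hk
        have hX : ((M₁ k)⁻¹).PosDef := (h1pd k hk).inv
        have hXdet : IsUnit ((M₁ k)⁻¹).det := hX.det_pos.ne'.isUnit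
        have hTk : T₁ k = T₂ k := by
          have e := hkey ⟨k, by omega⟩ ⟨k+1, by omega⟩
          simp only [F, Fin.val_mk, if_neg (show ¬ k = k+1 by omega), if_pos rfl] at e
          have e' : (M₁ k)⁻¹ * T₁ k = (M₁ k)⁻¹ * T₂ k := by
            have := neg_injective e
            rw [← hSk] at this
            exact this
          calc T₁ k = ((M₁ k)⁻¹)⁻¹ * ((M₁ k)⁻¹ * T₁ k) := by
                rw [← Matrix.mul_assoc, Matrix.nonsing_inv_mul _ hXdet, Matrix.one_mul]
            _ = ((M₁ k)⁻¹)⁻¹ * ((M₁ k)⁻¹ * T₂ k) := by rw [e']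
            _ = T₂ k := by
                rw [← Matrix.mul_assoc, Matrix.nonsing_inv_mul _ hXdet, Matrix.one_mul]
        constructor
        · have e := hkey ⟨k+1, by omega⟩ ⟨k+1, by omega⟩
          simp only [F, Fin.val_mk, if_pos rfl, if_neg (show ¬ k+1 = 0 by omega),
            Nat.add_sub_cancel] at e
          rw [hSk, hTk] at e
          exact add_right_cancel e
        · intro m hm
          rcases Nat.lt_succ_iff_lt_or_eq.mp hm with h | h
          · exact hTm m h
          · rw [h]; exact hTk
    constructor
    · intro k hk
      have h := (hstep k hk).1
      have h1 : IsUnit (M₁ k).det := (h1pd k hk).det_pos.ne'.isUnit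
      have h2 : IsUnit (M₂ k).det := (h2pd k hk).det_pos.ne'.isUnit
      calc M₁ k = ((M₁ k)⁻¹)⁻¹ := (Matrix.nonsing_inv_nonsing_inv _ h1).symm
        _ = ((M₂ k)⁻¹)⁻¹ := by rw [h]
        _ = M₂ k := Matrix.nonsing_inv_nonsing_inv _ h2
    · intro k hk
      exact (hstep N (le_refl N)).2 k hk
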